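/- For all nonnegative integers m and n and all real x, y, the bivariate r-Bell polynomials satisfy φ_{m+n,r}(x,y) = Σ_{i=0}^{n} Σ_{k=0}^{m} C(n,i) · φ_{i,r}(x−k, y) · (x)_k · y^k · k^{n−i} · {m+r brace k+r}_r, where {m+r brace k+r}_r is the r-Stirling number of the second kind (with the convention 0^0 = 1). -/
import Mathlib


open Finset

noncomputable section

/-- The falling factorial `(x)_k = x (x-1) ⋯ (x-k+1)`. -/
def fallFac (x : ℝ) (k : ℕ) : ℝ := ∏ i ∈ Finset.range k, (x - (i : ℝ))

/-- The r-Stirling numbers of the second kind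
`{n+r brace k+r}_r = (1/k!) ∑_{j=0}^{k} C(k,j) (−1)^{k−j} (j+r)^n`. -/
def rStirling2 (r n k : ℕ) : ℝ :=
  ((k.factorial : ℝ))⁻¹ *
    ∑ j ∈ Finset.range (k + 1), (k.choose j : ℝ) * (-1) ^ (k - j) * ((j : ℝ) + r) ^ n

/-- The bivariate r-Bell polynomials `φ_{n,r}(x,y) = ∑_{k=0}^{n} {n+r brace k+r}_r (x)_k y^k`. -/
def phiRBiv (r n : ℕ) (x y : ℝ) : ℝ :=
  ∑ k ∈ Finset.range (n + 1), rStirling2 r n k * fallFac x k * y ^ k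

lemma rS_zero_zero (r : ℕ) : rStirling2 r 0 0 = 1 := by
  simp [rStirling2]

lemma rS_n_zero (r n : ℕ) : rStirling2 r n 0 = (r : ℝ) ^ n := by
  simp [rStirling2]

lemma key_sum (r n k : ℕ) :
    ∑ j ∈ range (k+2), ((k+1).choose j : ℝ) * (-1)^(k+1-j) * ((j:ℝ)+r)^(n+1)
    = (k+1) * ∑ j ∈ range (k+1), (k.choose j : ℝ) * (-1)^(k-j) * ((j:ℝ)+r)^n
      + ((k:ℝ)+1+r) * ∑ j ∈ range (k+2), ((k+1).choose j : ℝ) * (-1)^(k+1-j) * ((j:ℝ)+r)^n := by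
  have h1 : ∀ j ∈ range (k+2),
      ((k+1).choose j : ℝ) * (-1)^(k+1-j) * ((j:ℝ)+r)^(n+1)
      = ((k+1).choose j : ℝ) * (-1)^(k+1-j) * ((j:ℝ)+r)^n * ((j:ℝ)-(k+1))
        + ((k:ℝ)+1+r) * (((k+1).choose j : ℝ) * (-1)^(k+1-j) * ((j:ℝ)+r)^n) := by
    intro j _
    ring
  rw [Finset.sum_congr rfl h1, Finset.sum_add_distrib]
  have h2 : ∀ j ∈ range (k+2),
      ((k+1).choose j : ℝ) * (-1)^(k+1-j) * ((j:ℝ)+r)^n * ((j:ℝ)-(k+1))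
      = (k+1) * ((k.choose j : ℝ) * (-1)^(k-j) * ((j:ℝ)+r)^n) := by
    intro j hj
    rw [Finset.mem_range] at hj
    rcases Nat.lt_succ_iff_lt_or_eq.mp hj with hj | hj
    · -- j ≤ k
      have hjk : j ≤ k := Nat.lt_succ_iff.mp hj
      have hnat : (k+1).choose j * (k+1-j) = (k+1) * k.choose j := by
        rw [← Nat.choose_mul_succ_eq]; ring
      have hc : ((k+1).choose j : ℝ) * (((k+1-j : ℕ)) : ℝ) = ((k:ℝ)+1) * (k.choose j : ℝ) := by
        exact_mod_cast hnat
      have hsub : ((j:ℝ) - ((k:ℝ)+1)) = -(((k+1-j : ℕ) : ℝ)) := by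
        have : ((k+1-j : ℕ) : ℝ) = (k+1 : ℕ) - (j:ℝ) := by
          rw [Nat.cast_sub (by omega)]
        rw [this]; push_cast; ring
      have hexp : (k+1-j) = (k-j)+1 := by omega
      rw [hsub, hexp, pow_succ]
      have hc' : ((k+1).choose j : ℝ) * (((k-j)+1 : ℕ) : ℝ) = (k+1) * (k.choose j : ℝ) := by
        rw [← hexp]; exact_mod_cast hc
      push_cast at hc' ⊢
      linear_combination ((-1:ℝ)^(k-j) * ((j:ℝ)+(r:ℝ))^n) * hc'
    · subst hj
      simp [Nat.choose_succ_self]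
  congr 1
  · rw [Finset.sum_congr rfl h2, Finset.sum_range_succ, Nat.choose_succ_self]
    simp [Finset.mul_sum]
  · exact (Finset.mul_sum _ _ _).symm

lemma rS_rec (r n k : ℕ) :
    rStirling2 r (n+1) (k+1) = rStirling2 r n k + ((k:ℝ)+1+r) * rStirling2 r n (k+1) := by
  unfold rStirling2
  have hk : ((k+1).factorial : ℝ) = ((k:ℝ)+1) * (k.factorial : ℝ) := by
    rw [Nat.factorial_succ]; push_cast; ring
  have h0 : ((k.factorial : ℝ)) ≠ 0 := Nat.cast_ne_zero.mpr k.factorial_ne_zero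
  have h1 : ((k:ℝ)+1) ≠ 0 := by positivity
  have := key_sum r n k
  rw [hk, mul_inv]
  rw [show k+1+1 = k+2 from rfl] at *
  rw [this]
  field_simp

lemma alt_sum (K : ℕ) : ∑ j ∈ range (K+2), ((K+1).choose j : ℝ) * (-1)^(K+1-j) = 0 := by
  have h := add_pow (1:ℝ) (-1) (K+1)
  rw [add_neg_cancel, zero_pow (Nat.succ_ne_zero K)] at h
  calc ∑ j ∈ range (K+2), ((K+1).choose j : ℝ) * (-1)^(K+1-j)
      = ∑ j ∈ range (K+2), (1:ℝ)^j * (-1)^(K+1-j) * ((K+1).choose j) :=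
        Finset.sum_congr rfl fun j _ => by ring
    _ = 0 := h.symm

lemma rS_zero_succ (r k : ℕ) : rStirling2 r 0 (k+1) = 0 := by
  unfold rStirling2
  have h : ∑ j ∈ range (k+2), ((k+1).choose j : ℝ) * (-1)^(k+1-j) * ((j:ℝ)+r)^0 = 0 := by
    calc ∑ j ∈ range (k+2), ((k+1).choose j : ℝ) * (-1)^(k+1-j) * ((j:ℝ)+r)^0
        = ∑ j ∈ range (k+2), ((k+1).choose j : ℝ) * (-1)^(k+1-j) :=
          Finset.sum_congr rfl fun j _ => by ring
      _ = 0 := alt_sum k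
  rw [show k+1+1 = k+2 from rfl, h, mul_zero]

lemma rS_eq_zero (r : ℕ) : ∀ n k, n < k → rStirling2 r n k = 0 := by
  intro n
  induction n with
  | zero =>
    intro k hk
    obtain ⟨k', rfl⟩ : ∃ k', k = k'+1 := ⟨k-1, by omega⟩
    exact rS_zero_succ r k'
  | succ n ih =>
    intro k hk
    obtain ⟨k', rfl⟩ : ∃ k', k = k'+1 := ⟨k-1, by omega⟩
    rw [rS_rec, ih k' (by omega), ih (k'+1) (by omega)]
    ring

lemma rS_conv (r m : ℕ) : ∀ n l, rStirling2 r (m+n) l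
    = ∑ k ∈ range (l+1), rStirling2 r m k * rStirling2 (r+k) n (l-k) := by
  intro n
  induction n with
  | zero =>
    intro l
    rw [Nat.add_zero, Finset.sum_range_succ, Nat.sub_self, rS_zero_zero, mul_one]
    have h : ∀ k ∈ range l, rStirling2 r m k * rStirling2 (r+k) 0 (l-k) = 0 := by
      intro k hk
      rw [Finset.mem_range] at hk
      obtain ⟨d, hd⟩ : ∃ d, l - k = d+1 := ⟨l-k-1, by omega⟩
      rw [hd, rS_zero_succ, mul_zero]
    rw [Finset.sum_congr rfl h, Finset.sum_const_zero, zero_add]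
  | succ n ih =>
    intro l
    cases l with
    | zero =>
      simp [rS_n_zero, ← pow_add]
    | succ l =>
      have key : ∀ k ∈ range (l+1),
          rStirling2 r m k * rStirling2 (r+k) (n+1) (l+1-k)
          = rStirling2 r m k * rStirling2 (r+k) n (l-k)
            + ((l:ℝ)+1+r) * (rStirling2 r m k * rStirling2 (r+k) n (l+1-k)) := by
        intro k hk
        rw [Finset.mem_range, Nat.lt_succ_iff] at hk
        have h1 : l+1-k = (l-k)+1 := by omega
        rw [h1, rS_rec]
        have h3 : (((l-k:ℕ):ℝ)+1+((r+k:ℕ):ℝ)) = (l:ℝ)+1+r := by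
          push_cast [Nat.cast_sub hk]; ring
        rw [h3]
        ring
      rw [show m+(n+1) = (m+n)+1 from rfl, rS_rec, ih l, ih (l+1)]
      rw [Finset.sum_range_succ
        (f := fun k => rStirling2 r m k * rStirling2 (r+k) (n+1) (l+1-k))]
      rw [Finset.sum_congr rfl key, Finset.sum_add_distrib, Nat.sub_self]
      have hlast : rStirling2 (r+(l+1)) (n+1) 0 = ((l:ℝ)+1+r) * rStirling2 (r+(l+1)) n 0 := by
        rw [rS_n_zero, rS_n_zero, pow_succ]
        push_cast
        ring
      rw [hlast,
        Finset.sum_range_succ (f := fun k => rStirling2 r m k * rStirling2 (r+k) n (l+1-k)),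
        Nat.sub_self, mul_add, Finset.mul_sum]
      ring

lemma rS_shift (r n k a : ℕ) :
    ∑ i ∈ range (n+1), (n.choose i : ℝ) * (k:ℝ)^(n-i) * rStirling2 r i a
    = rStirling2 (r+k) n a := by
  unfold rStirling2
  calc ∑ i ∈ range (n+1), (n.choose i : ℝ) * (k:ℝ)^(n-i) *
        (((a.factorial : ℝ))⁻¹ * ∑ j ∈ range (a+1), (a.choose j : ℝ) * (-1)^(a-j) * ((j:ℝ)+r)^i)
      = ∑ i ∈ range (n+1), ∑ j ∈ range (a+1),
          ((a.factorial : ℝ))⁻¹ * ((a.choose j : ℝ) * (-1)^(a-j)) *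
            (((j:ℝ)+r)^i * (k:ℝ)^(n-i) * (n.choose i : ℝ)) := by
        refine Finset.sum_congr rfl fun i _ => ?_
        rw [Finset.mul_sum, Finset.mul_sum]
        exact Finset.sum_congr rfl fun j _ => by ring
    _ = ∑ j ∈ range (a+1),
          ((a.factorial : ℝ))⁻¹ * ((a.choose j : ℝ) * (-1)^(a-j)) *
            ∑ i ∈ range (n+1), (((j:ℝ)+r)^i * (k:ℝ)^(n-i) * (n.choose i : ℝ)) := by
        rw [Finset.sum_comm]
        exact Finset.sum_congr rfl fun j _ => by rw [Finset.mul_sum]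
    _ = ∑ j ∈ range (a+1),
          ((a.factorial : ℝ))⁻¹ * ((a.choose j : ℝ) * (-1)^(a-j)) * ((j:ℝ)+((r+k:ℕ):ℝ))^n := by
        refine Finset.sum_congr rfl fun j _ => ?_
        rw [← add_pow]
        push_cast
        ring_nf
    _ = ((a.factorial : ℝ))⁻¹ * ∑ j ∈ range (a+1), (a.choose j : ℝ) * (-1)^(a-j) * ((j:ℝ)+((r+k:ℕ):ℝ))^n := by
        rw [Finset.mul_sum]
        exact Finset.sum_congr rfl fun j _ => by ring

lemma fallFac_add (x : ℝ) (k a : ℕ) : fallFac x (k+a) = fallFac x k * fallFac (x - (k:ℝ)) a := by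
  unfold fallFac
  rw [Finset.prod_range_add]
  congr 1
  exact Finset.prod_congr rfl fun i _ => by push_cast; ring

lemma phi_ext (r i N : ℕ) (h : i ≤ N) (z y : ℝ) :
    phiRBiv r i z y = ∑ a ∈ range (N+1), rStirling2 r i a * fallFac z a * y^a := by
  unfold phiRBiv
  refine Finset.sum_subset ?_ ?_
  · intro a ha
    rw [Finset.mem_range] at *
    omega
  · intro a _ ha
    rw [Finset.mem_range, not_lt] at ha
    rw [rS_eq_zero r i a (by omega), zero_mul, zero_mul]

lemma tri (M : ℕ) (f : ℕ → ℕ → ℝ) :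
    ∑ l ∈ range (M+1), ∑ k ∈ range (l+1), f k (l-k)
    = ∑ k ∈ range (M+1), ∑ a ∈ range (M+1-k), f k a := by
  induction M with
  | zero => simp
  | succ M ih =>
    rw [Finset.sum_range_succ, ih,
      Finset.sum_range_succ (f := fun k => ∑ a ∈ range (M+1+1-k), f k a),
      Finset.sum_range_succ (f := fun k => f k (M+1-k)), Nat.sub_self,
      show M+1+1-(M+1) = 1 from by omega, Finset.sum_range_one]
    have h2 : ∀ k ∈ range (M+1),
        ∑ a ∈ range (M+1+1-k), f k a = (∑ a ∈ range (M+1-k), f k a) + f k (M+1-k) := by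
      intro k hk
      rw [Finset.mem_range] at hk
      rw [show M+1+1-k = (M+1-k)+1 from by omega, Finset.sum_range_succ]
    rw [Finset.sum_congr rfl h2, Finset.sum_add_distrib]
    ring

theorem bivRBell_recurrence (r : ℕ) (hr : 0 < r) (m n : ℕ) (x y : ℝ) :
    phiRBiv r (m + n) x y =
      ∑ i ∈ Finset.range (n + 1), ∑ k ∈ Finset.range (m + 1),
        (n.choose i : ℝ) * phiRBiv r i (x - (k : ℝ)) y * fallFac x k * y ^ k *
          (k : ℝ) ^ (n - i) * rStirling2 r m k := by
  set g : ℕ → ℕ → ℝ := fun k a =>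
    rStirling2 r m k * rStirling2 (r+k) n a * fallFac x (k+a) * y^(k+a) with hg
  have main : ∀ k : ℕ, ∑ i ∈ range (n+1),
      (n.choose i : ℝ) * phiRBiv r i (x - (k:ℝ)) y * fallFac x k * y ^ k *
        (k:ℝ)^(n-i) * rStirling2 r m k
      = ∑ a ∈ range (n+1), g k a := by
    intro k
    calc ∑ i ∈ range (n+1),
          (n.choose i : ℝ) * phiRBiv r i (x - (k:ℝ)) y * fallFac x k * y ^ k *
            (k:ℝ)^(n-i) * rStirling2 r m k
        = ∑ i ∈ range (n+1), ∑ a ∈ range (n+1),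
            ((n.choose i : ℝ) * (k:ℝ)^(n-i) * rStirling2 r i a) *
              (rStirling2 r m k * fallFac x k * fallFac (x-(k:ℝ)) a * y^k * y^a) := by
          refine Finset.sum_congr rfl fun i hi => ?_
          rw [Finset.mem_range, Nat.lt_succ_iff] at hi
          calc (n.choose i : ℝ) * phiRBiv r i (x - (k:ℝ)) y * fallFac x k * y ^ k *
                (k:ℝ)^(n-i) * rStirling2 r m k
              = (∑ a ∈ range (n+1), rStirling2 r i a * fallFac (x-(k:ℝ)) a * y^a) *
                  ((n.choose i : ℝ) * fallFac x k * y^k * (k:ℝ)^(n-i) * rStirling2 r m k) := by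
                rw [phi_ext r i n hi]; ring
            _ = ∑ a ∈ range (n+1), (rStirling2 r i a * fallFac (x-(k:ℝ)) a * y^a) *
                  ((n.choose i : ℝ) * fallFac x k * y^k * (k:ℝ)^(n-i) * rStirling2 r m k) :=
                Finset.sum_mul _ _ _
            _ = _ := Finset.sum_congr rfl fun a _ => by ring
      _ = ∑ a ∈ range (n+1),
            (∑ i ∈ range (n+1), (n.choose i : ℝ) * (k:ℝ)^(n-i) * rStirling2 r i a) *
              (rStirling2 r m k * fallFac x k * fallFac (x-(k:ℝ)) a * y^k * y^a) := by
          rw [Finset.sum_comm]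
          exact Finset.sum_congr rfl fun a _ => (Finset.sum_mul _ _ _).symm
      _ = ∑ a ∈ range (n+1), rStirling2 (r+k) n a *
              (rStirling2 r m k * fallFac x k * fallFac (x-(k:ℝ)) a * y^k * y^a) :=
          Finset.sum_congr rfl fun a _ => by rw [rS_shift]
      _ = ∑ a ∈ range (n+1), g k a := by
          refine Finset.sum_congr rfl fun a _ => ?_
          rw [hg]
          simp only
          rw [fallFac_add, pow_add]
          ring
  rw [Finset.sum_comm, Finset.sum_congr rfl fun k _ => main k]
  -- now: phiRBiv r (m+n) x y = ∑ k ∈ range (m+1), ∑ a ∈ range (n+1), g k a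
  calc phiRBiv r (m+n) x y
      = ∑ l ∈ range (m+n+1), rStirling2 r (m+n) l * fallFac x l * y^l := rfl
    _ = ∑ l ∈ range (m+n+1), ∑ k ∈ range (l+1), g k (l-k) := by
        refine Finset.sum_congr rfl fun l _ => ?_
        rw [rS_conv r m n l, Finset.sum_mul, Finset.sum_mul]
        refine Finset.sum_congr rfl fun k hk => ?_
        rw [Finset.mem_range, Nat.lt_succ_iff] at hk
        rw [hg]
        simp only
        rw [show k + (l-k) = l from by omega]
    _ = ∑ k ∈ range (m+n+1), ∑ a ∈ range (m+n+1-k), g k a := tri (m+n) g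
    _ = ∑ k ∈ range (m+1), ∑ a ∈ range (m+n+1-k), g k a := by
        refine (Finset.sum_subset ?_ ?_).symm
        · intro k hk; rw [Finset.mem_range] at *; omega
        · intro k _ hk
          rw [Finset.mem_range, not_lt] at hk
          refine Finset.sum_eq_zero fun a _ => ?_
          rw [hg]; simp only
          rw [rS_eq_zero r m k (by omega), zero_mul, zero_mul, zero_mul]
    _ = ∑ k ∈ range (m+1), ∑ a ∈ range (n+1), g k a := by
        refine Finset.sum_congr rfl fun k hk => ?_
        rw [Finset.mem_range, Nat.lt_succ_iff] at hk
        refine (Finset.sum_subset ?_ ?_).symm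
        · intro a ha; rw [Finset.mem_range] at *; omega
        · intro a _ ha
          rw [Finset.mem_range, not_lt] at ha
          rw [hg]; simp only
          rw [rS_eq_zero (r+k) n a (by omega), mul_zero, zero_mul, zero_mul]


end
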